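/- arXiv:1901.02124 — 4 statements merged into one kernel-verified Lean document; each statement's English description precedes it below -/
import Mathlib

section
/- Let d ≥ 1 be an integer and let x, R be real numbers with x ≥ 2. Suppose we are given, for each i ∈ {1,…,3d}, a natural number d_i and integers m_i, k_i such that: (1) Σ_i d_i = d; (2) Σ_i m_i = 0; (3) Σ_i k_i = 0; (4) for every i, 3·d_i + m_i + k_i = 1; (5) for every i, R·d_i + m_i + k_i·x > 0; and (6) Σ_{i : m_i > 0} m_i ≥ 3d − 1. Then R > 3 − 1/d. -/
/-!
A component with `m > 0` has `k = 1 - 3D - m ≤ 0`, so for `x ≥ 2` its area is at most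
`R D + m + 2k = R D + 2 - 6D - m`. If it has positive degree, positivity of the area forces
`R > 5`. Otherwise it is a plane (`D = 0`) with `m = 1`, `k = 0`, whose area is exactly `m`.
If all components with `m > 0` are planes then, since `∑ m = ∑ k = 0`, the total area is `R d`; it exceeds the area `∑_{m > 0} m`
of the planes by the (positive) area of the components carrying the degree, so
`R d > 3d - 1`.
-/

open Finset

/-- The symplectic area of a component of degree `D` asymptotic to a Reeb orbit of type
`(-m, -k)`. -/
def componentArea (R x : ℝ) (D : ℕ) (m k : ℤ) : ℝ := R * D + m + k * x

lemma sum_componentArea {ι : Type*} (s : Finset ι) (R x : ℝ) (D : ι → ℕ) (m k : ι → ℤ) :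
    ∑ i ∈ s, componentArea R x (D i) (m i) (k i) =
      R * ((∑ i ∈ s, D i : ℕ) : ℝ) + ((∑ i ∈ s, m i : ℤ) : ℝ) + ((∑ i ∈ s, k i : ℤ) : ℝ) * x := by
  simp only [componentArea, sum_add_distrib, ← mul_sum, ← sum_mul]
  push_cast
  rfl

lemma five_lt_of_componentArea_pos {R x : ℝ} {D : ℕ} {m k : ℤ} (hx : 2 ≤ x)
    (hindex : 3 * (D : ℤ) + m + k = 1) (hm : 0 < m) (hD : 0 < D)
    (harea : 0 < componentArea R x D m k) : 5 < R := by
  have hk : (k : ℝ) ≤ -3 * D := by exact_mod_cast (by omega : k ≤ -3 * (D : ℤ))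
  have hindexR : 3 * (D : ℝ) + m + k = 1 := by exact_mod_cast hindex
  have hmR : (1 : ℝ) ≤ m := by exact_mod_cast hm
  have hDR : (1 : ℝ) ≤ D := by exact_mod_cast hD
  have hkx : (k : ℝ) * x ≤ k * 2 := by nlinarith
  have hRD : 5 * (D : ℝ) < R * D := by unfold componentArea at harea; linarith
  nlinarith

lemma eq_zero_of_componentArea_pos {R x : ℝ} {m k : ℤ} (hx : 2 ≤ x) (hindex : m + k = 1)
    (hm : 0 < m) (harea : 0 < componentArea R x 0 m k) : k = 0 := by
  have hk : (k : ℝ) ≤ 0 := by exact_mod_cast (by omega : k ≤ 0)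
  have hindexR : (m : ℝ) + k = 1 := by exact_mod_cast hindex
  have hkx : (k : ℝ) * x ≤ k * 2 := by nlinarith
  have : (-1 : ℝ) < k := by simp only [componentArea, Nat.cast_zero, mul_zero] at harea; linarith
  have : -1 < k := by exact_mod_cast this
  omega

lemma sum_pos_m_lt_mul_sum_degree {ι : Type*} [Fintype ι] {R x : ℝ} {D : ι → ℕ} {m k : ι → ℤ}
    (hm : ∑ i, m i = 0) (hk : ∑ i, k i = 0)
    (harea : ∀ i, 0 < componentArea R x (D i) (m i) (k i))
    (hplane : ∀ i, 0 < m i → D i = 0 ∧ k i = 0) (hD : ∑ i, D i ≠ 0) :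
    ((∑ i ∈ univ.filter (fun i => 0 < m i), m i : ℤ) : ℝ) < R * ((∑ i, D i : ℕ) : ℝ) := by
  have htotal : ∑ i, componentArea R x (D i) (m i) (k i) = R * ((∑ i, D i : ℕ) : ℝ) := by
    rw [sum_componentArea, hm, hk]
    simp
  have hplanes : ∑ i ∈ univ.filter (fun i => 0 < m i), componentArea R x (D i) (m i) (k i) =
      ∑ i ∈ univ.filter (fun i => 0 < m i), (m i : ℝ) := by
    refine sum_congr rfl fun i hi => ?_
    obtain ⟨hD0, hk0⟩ := hplane i (mem_filter.mp hi).2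
    simp [componentArea, hD0, hk0]
  obtain ⟨j, -, hj⟩ := exists_ne_zero_of_sum_ne_zero hD
  have hrest : 0 < ∑ i ∈ univ.filter (fun i => ¬ 0 < m i), componentArea R x (D i) (m i) (k i) :=
    sum_pos (fun i _ => harea i)
      ⟨j, mem_filter.mpr ⟨mem_univ j, fun hmj => hj (hplane j hmj).1⟩⟩
  rw [← htotal, ← sum_filter_add_sum_filter_not univ (fun i => 0 < m i), hplanes]
  push_cast
  linarith

/-- Combinatorial core of the obstruction (case `x ≥ 2`): the `3d` components `Fᵢ`
of degree `dᵢ` asymptotic to orbits of type `(-mᵢ, -kᵢ)` force `R > 3 - 1/d`. -/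
theorem stmt_0 (d : ℕ) (hd : 1 ≤ d) (x R : ℝ) (hx : 2 ≤ x)
    (D : Fin (3 * d) → ℕ) (m k : Fin (3 * d) → ℤ)
    (h1 : ∑ i, D i = d)
    (h2 : ∑ i, m i = 0)
    (h3 : ∑ i, k i = 0)
    (h4 : ∀ i, 3 * (D i : ℤ) + m i + k i = 1)
    (h5 : ∀ i, R * (D i : ℝ) + (m i : ℝ) + (k i : ℝ) * x > 0)
    (h6 : ∑ i ∈ Finset.univ.filter (fun i => 0 < m i), m i ≥ 3 * (d : ℤ) - 1) :
    R > 3 - 1 / (d : ℝ) := by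
  have hdR : (0 : ℝ) < d := by exact_mod_cast hd
  by_cases hdegree : ∃ i, 0 < m i ∧ 0 < D i
  · obtain ⟨i, hmi, hDi⟩ := hdegree
    have hR := five_lt_of_componentArea_pos hx (h4 i) hmi hDi (h5 i)
    have : 0 < 1 / (d : ℝ) := by positivity
    linarith
  push Not at hdegree
  have hplane : ∀ i, 0 < m i → D i = 0 ∧ k i = 0 := fun i hmi => by
    have hD0 : D i = 0 := by have := hdegree i hmi; omega
    refine ⟨hD0, eq_zero_of_componentArea_pos (R := R) hx ?_ hmi ?_⟩
    · simpa [hD0] using h4 i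
    · simpa [componentArea, hD0] using h5 i
  have hlt := sum_pos_m_lt_mul_sum_degree h2 h3 h5 hplane (by omega)
  rw [h1] at hlt
  have h6R : 3 * (d : ℝ) - 1 ≤ ((∑ i ∈ univ.filter (fun i => 0 < m i), m i : ℤ) : ℝ) := by
    exact_mod_cast h6
  rw [gt_iff_lt, show (3 : ℝ) - 1 / d = (3 * d - 1) / d by field_simp, div_lt_iff₀ hdR]
  linarith
end

section
/- Let d ≥ 1 be an integer and let x, a, b be real numbers with x > 2, a < 2 and b < x. Suppose we are given, for each i ∈ {1,…,2d+2}, natural numbers d¹_i, d²_i and integers m_i, k_i such that: (1) Σ_i d¹_i = d; (2) Σ_i d²_i = 1; (3) Σ_i m_i = 0; (4) Σ_i k_i = 0; (5) for every i, 2(d¹_i + d²_i) + m_i + k_i = 1; (6) for every i, a·d¹_i + b·d²_i + m_i + k_i·x > 0; and (7) Σ_{i : m_i > 0} m_i ≥ 2d + 1. Then (a − 2)·d + b > 1. -/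
/-- Combinatorial core of the obstruction part of Theorem 1.3 (case `x > 2`):
the `2d+2` components `Fᵢ` of bidegree `(d¹ᵢ, d²ᵢ)` asymptotic to orbits of type
`(-mᵢ, -kᵢ)` force `(a-2)·d + b > 1`. -/
theorem stmt_2 (d : ℕ) (hd : 1 ≤ d) (x a b : ℝ) (hx : 2 < x) (ha : a < 2) (hb : b < x)
    (D1 D2 : Fin (2 * d + 2) → ℕ) (m k : Fin (2 * d + 2) → ℤ)
    (h1 : ∑ i, D1 i = d)
    (h2 : ∑ i, D2 i = 1)
    (h3 : ∑ i, m i = 0)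
    (h4 : ∑ i, k i = 0)
    (h5 : ∀ i, 2 * ((D1 i : ℤ) + (D2 i : ℤ)) + m i + k i = 1)
    (h6 : ∀ i, a * (D1 i : ℝ) + b * (D2 i : ℝ) + (m i : ℝ) + (k i : ℝ) * x > 0)
    (h7 : ∑ i ∈ Finset.univ.filter (fun i => 0 < m i), m i ≥ 2 * (d : ℤ) + 1) :
    (a - 2) * (d : ℝ) + b > 1 := by
  classical
  set P : Finset (Fin (2 * d + 2)) := Finset.univ.filter (fun i => 0 < m i) with hP
  -- Step 1: on P, everything is pinned down.
  have key : ∀ i ∈ P, D1 i = 0 ∧ D2 i = 0 ∧ m i = 1 ∧ k i = 0 := by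
    intro i hi
    have hm1 : (1 : ℤ) ≤ m i := by
      have := (Finset.mem_filter.mp hi).2
      omega
    have hmR : (1 : ℝ) ≤ (m i : ℝ) := by exact_mod_cast hm1
    have hk : (k i : ℝ) = 1 - 2 * ((D1 i : ℝ) + (D2 i : ℝ)) - (m i : ℝ) := by
      have h5i := h5 i
      have : ((2 * ((D1 i : ℤ) + (D2 i : ℤ)) + m i + k i : ℤ) : ℝ) = ((1 : ℤ) : ℝ) := by
        exact_mod_cast congrArg (fun z : ℤ => (z : ℝ)) h5i
      push_cast at this
      linarith
    have h6i := h6 i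
    rw [hk] at h6i
    have hD1nn : (0 : ℝ) ≤ (D1 i : ℝ) := by positivity
    have hD2nn : (0 : ℝ) ≤ (D2 i : ℝ) := by positivity
    -- main inequality: (2x-a)D1 + (2x-b)D2 + (x-1)m < x
    have main : (2 * x - a) * (D1 i : ℝ) + (2 * x - b) * (D2 i : ℝ)
        + (x - 1) * (m i : ℝ) < x := by nlinarith [h6i]
    have hD1 : D1 i = 0 := by
      by_contra h
      have h1' : (1 : ℝ) ≤ (D1 i : ℝ) := by
        exact_mod_cast Nat.one_le_iff_ne_zero.mpr h
      nlinarith [mul_nonneg (by linarith : (0:ℝ) ≤ 2*x - b) hD2nn,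
        mul_nonneg (by linarith : (0:ℝ) ≤ x - 1) (by linarith : (0:ℝ) ≤ (m i : ℝ) - 1),
        mul_nonneg (by linarith : (0:ℝ) ≤ 2*x - a) (by linarith : (0:ℝ) ≤ (D1 i : ℝ) - 1)]
    have hD2 : D2 i = 0 := by
      by_contra h
      have h1' : (1 : ℝ) ≤ (D2 i : ℝ) := by
        exact_mod_cast Nat.one_le_iff_ne_zero.mpr h
      nlinarith [mul_nonneg (by linarith : (0:ℝ) ≤ 2*x - a) hD1nn,
        mul_nonneg (by linarith : (0:ℝ) ≤ x - 1) (by linarith : (0:ℝ) ≤ (m i : ℝ) - 1),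
        mul_nonneg (by linarith : (0:ℝ) ≤ 2*x - b) (by linarith : (0:ℝ) ≤ (D2 i : ℝ) - 1)]
    have hm : m i = 1 := by
      by_contra h
      have h2' : (2 : ℤ) ≤ m i := by omega
      have h2R : (2 : ℝ) ≤ (m i : ℝ) := by exact_mod_cast h2'
      nlinarith [mul_nonneg (by linarith : (0:ℝ) ≤ 2*x - a) hD1nn,
        mul_nonneg (by linarith : (0:ℝ) ≤ 2*x - b) hD2nn,
        mul_nonneg (by linarith : (0:ℝ) ≤ x - 1) (by linarith : (0:ℝ) ≤ (m i : ℝ) - 2)]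
    have hk0 : k i = 0 := by
      have := h5 i
      rw [hD1, hD2, hm] at this
      push_cast at this
      omega
    exact ⟨hD1, hD2, hm, hk0⟩
  -- Step 2: sums over P
  have hsumPm : ∑ i ∈ P, m i = (P.card : ℤ) := by
    rw [Finset.sum_congr rfl (fun i hi => (key i hi).2.2.1)]
    simp
  have hcard : (2 * d + 1 : ℤ) ≤ (P.card : ℤ) := by
    rw [hsumPm] at h7
    linarith [h7]
  have hsumPD1 : ∑ i ∈ P, D1 i = 0 := by
    rw [Finset.sum_congr rfl (fun i hi => (key i hi).1)]; simp
  have hsumPD2 : ∑ i ∈ P, D2 i = 0 := by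
    rw [Finset.sum_congr rfl (fun i hi => (key i hi).2.1)]; simp
  have hsumPk : ∑ i ∈ P, k i = 0 := by
    rw [Finset.sum_congr rfl (fun i hi => (key i hi).2.2.2)]; simp
  -- split sums into P and Pᶜ
  have hsplit1 : ∑ i ∈ P, D1 i + ∑ i ∈ Pᶜ, D1 i = d := by
    rw [Finset.sum_add_sum_compl]; exact h1
  have hsplit2 : ∑ i ∈ P, D2 i + ∑ i ∈ Pᶜ, D2 i = 1 := by
    rw [Finset.sum_add_sum_compl]; exact h2
  have hsplit3 : ∑ i ∈ P, m i + ∑ i ∈ Pᶜ, m i = 0 := by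
    rw [Finset.sum_add_sum_compl]; exact h3
  have hsplit4 : ∑ i ∈ P, k i + ∑ i ∈ Pᶜ, k i = 0 := by
    rw [Finset.sum_add_sum_compl]; exact h4
  have hQD1 : ∑ i ∈ Pᶜ, D1 i = d := by omega
  -- Pᶜ is nonempty
  have hQne : Pᶜ.Nonempty := by
    rcases Finset.eq_empty_or_nonempty Pᶜ with h | h
    · rw [h] at hQD1; simp at hQD1; omega
    · exact h
  -- card Pᶜ = 1
  have hcardsum : P.card + Pᶜ.card = 2 * d + 2 := by
    rw [Finset.card_add_card_compl]
    simp
  have hQ1 : Pᶜ.card = 1 := by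
    have h1' : 1 ≤ Pᶜ.card := Finset.card_pos.mpr hQne
    have : (P.card : ℤ) ≤ 2 * d + 1 := by
      have := hcardsum
      omega
    omega
  obtain ⟨j, hj⟩ := Finset.card_eq_one.mp hQ1
  rw [hj] at hQD1 hsplit2 hsplit3 hsplit4
  simp only [Finset.sum_singleton] at hQD1 hsplit2 hsplit3 hsplit4
  have hD1j : D1 j = d := hQD1
  have hD2j : D2 j = 1 := by omega
  have hPcard : (P.card : ℤ) = 2 * d + 1 := by
    have := hcardsum
    rw [hj] at this
    simp at this
    omega
  have hmj : m j = -(2 * (d : ℤ) + 1) := by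
    rw [hsumPm, hPcard] at hsplit3
    omega
  have hkj : k j = 0 := by
    rw [hsumPk] at hsplit4
    omega
  have h6j := h6 j
  rw [hD1j, hD2j, hmj, hkj] at h6j
  push_cast at h6j
  linarith
end

section
/- Let S be a positive irrational real number. Let (r_i)_{i<p}, (t_j)_{j<q}, (r'_i)_{i<p'}, (t'_j)_{j<q'} be finite families of positive integers with p + q ≥ 1, and suppose that Σ_i r_i + S·Σ_j t_j ≥ Σ_i r'_i + S·Σ_j t'_j. Then Σ_i (r_i + ⌈r_i/S⌉) + Σ_j (t_j + ⌈t_j·S⌉) ≥ 1 + Σ_i (r'_i + ⌊r'_i/S⌋) + Σ_j (t'_j + ⌊t'_j·S⌋). -/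
/-!
With `A(r, t) = Σ rᵢ + S Σ tⱼ` the area of a set of ends, the unrounded index
`Σ (rᵢ + rᵢ/S) + Σ (tⱼ + tⱼ S)` equals `(1 + 1/S) · A(r, t)`, so the area inequality orders the
unrounded indices of the positive and the negative ends. Rounding the negative ends down can only
decrease theirs, while rounding the positive ends up strictly increases theirs, since `rᵢ/S` and
`tⱼ S` are irrational and there is at least one positive end. The two integer sums are therefore
strictly ordered.
-/

open Finset

theorem Irrational.lt_ceil {x : ℝ} (h : Irrational x) : x < ⌈x⌉ :=
  (Int.le_ceil x).lt_of_ne (h.ne_int _)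

theorem sum_lt_sum_ceil_of_irrational {ι : Type*} [Fintype ι] [Nonempty ι] {x : ι → ℝ}
    (hx : ∀ i, Irrational (x i)) : ∑ i, x i < ∑ i, (⌈x i⌉ : ℝ) :=
  sum_lt_sum_of_nonempty univ_nonempty fun i _ => (hx i).lt_ceil

section UnroundedIndex

variable {ι κ : Type*} [Fintype ι] [Fintype κ]

noncomputable def unroundedIndex (S : ℝ) (r : ι → ℕ) (t : κ → ℕ) : ℝ :=
  ∑ i, ((r i : ℝ) + r i / S) + ∑ j, ((t j : ℝ) + t j * S)

theorem unroundedIndex_eq_mul_area {S : ℝ} (hS : S ≠ 0) (r : ι → ℕ) (t : κ → ℕ) :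
    unroundedIndex S r t = (1 + 1 / S) * (∑ i, (r i : ℝ) + S * ∑ j, (t j : ℝ)) := by
  simp only [unroundedIndex, sum_add_distrib, ← sum_div, ← sum_mul]
  field_simp
  ring

theorem unroundedIndex_mono {ι' κ' : Type*} [Fintype ι'] [Fintype κ'] {S : ℝ} (hS : 0 < S)
    {r : ι → ℕ} {t : κ → ℕ} {r' : ι' → ℕ} {t' : κ' → ℕ}
    (harea : ∑ i, (r' i : ℝ) + S * ∑ j, (t' j : ℝ) ≤ ∑ i, (r i : ℝ) + S * ∑ j, (t j : ℝ)) :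
    unroundedIndex S r' t' ≤ unroundedIndex S r t := by
  rw [unroundedIndex_eq_mul_area hS.ne', unroundedIndex_eq_mul_area hS.ne']
  gcongr

theorem cast_sum_floor_le_unroundedIndex (S : ℝ) (r : ι → ℕ) (t : κ → ℕ) :
    ((∑ i, ((r i : ℤ) + ⌊(r i : ℝ) / S⌋) + ∑ j, ((t j : ℤ) + ⌊(t j : ℝ) * S⌋) : ℤ) : ℝ)
      ≤ unroundedIndex S r t := by
  push_cast
  unfold unroundedIndex
  gcongr <;> exact Int.floor_le _

theorem unroundedIndex_lt_cast_sum_ceil {S : ℝ} (hS : Irrational S) {r : ι → ℕ} {t : κ → ℕ}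
    (hr : ∀ i, 0 < r i) (ht : ∀ j, 0 < t j) (hne : Nonempty ι ∨ Nonempty κ) :
    unroundedIndex S r t
      < ((∑ i, ((r i : ℤ) + ⌈(r i : ℝ) / S⌉) + ∑ j, ((t j : ℤ) + ⌈(t j : ℝ) * S⌉) : ℤ) : ℝ) := by
  have hr_irr : ∀ i, Irrational ((r i : ℝ) / S) := fun i => hS.natCast_div (hr i).ne'
  have ht_irr : ∀ j, Irrational ((t j : ℝ) * S) := fun j => hS.natCast_mul (ht j).ne'
  have hr_le : ∑ i, (r i : ℝ) / S ≤ ∑ i, (⌈(r i : ℝ) / S⌉ : ℝ) :=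
    sum_le_sum fun i _ => Int.le_ceil _
  have ht_le : ∑ j, (t j : ℝ) * S ≤ ∑ j, (⌈(t j : ℝ) * S⌉ : ℝ) :=
    sum_le_sum fun j _ => Int.le_ceil _
  push_cast
  simp only [unroundedIndex, sum_add_distrib]
  rcases hne with hι | hκ
  · linarith [sum_lt_sum_ceil_of_irrational hr_irr]
  · linarith [sum_lt_sum_ceil_of_irrational ht_irr]

end UnroundedIndex

theorem stmt_4_general (S : ℝ) (hSpos : 0 < S) (hSirr : Irrational S)
    (p q p' q' : ℕ) (r : Fin p → ℕ) (t : Fin q → ℕ) (r' : Fin p' → ℕ) (t' : Fin q' → ℕ)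
    (hr : ∀ i, 0 < r i) (ht : ∀ j, 0 < t j)
    (hpq : 1 ≤ p + q)
    (harea : (∑ i, (r i : ℝ)) + S * (∑ j, (t j : ℝ))
      ≥ (∑ i, (r' i : ℝ)) + S * (∑ j, (t' j : ℝ))) :
    (∑ i, ((r i : ℤ) + ⌈(r i : ℝ) / S⌉)) + (∑ j, ((t j : ℤ) + ⌈(t j : ℝ) * S⌉))
      ≥ 1 + (∑ i, ((r' i : ℤ) + ⌊(r' i : ℝ) / S⌋))
          + (∑ j, ((t' j : ℤ) + ⌊(t' j : ℝ) * S⌋)) := by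
  have hne : Nonempty (Fin p) ∨ Nonempty (Fin q) := by
    simp only [← Fin.pos_iff_nonempty]
    omega
  have hlt := calc
    _ ≤ unroundedIndex S r' t' := cast_sum_floor_le_unroundedIndex S r' t'
    _ ≤ unroundedIndex S r t := unroundedIndex_mono hSpos harea
    _ < _ := unroundedIndex_lt_cast_sum_ceil hSirr hr ht hne
  rw [add_assoc, ge_iff_le, add_comm, Int.add_one_le_iff]
  exact_mod_cast hlt

/-- Arithmetic content of Proposition 3.3(e): nonnegativity of the index of a curve
in the symplectization of `∂E(1,S)` with positive ends `γ₁^{rᵢ}, γ₂^{tⱼ}` and negative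
ends `γ₁^{r'ᵢ}, γ₂^{t'ⱼ}`, given positivity of its area. -/
theorem stmt_4 (S : ℝ) (hSpos : 0 < S) (hSirr : Irrational S)
    (p q p' q' : ℕ) (r : Fin p → ℕ) (t : Fin q → ℕ) (r' : Fin p' → ℕ) (t' : Fin q' → ℕ)
    (hr : ∀ i, 0 < r i) (ht : ∀ j, 0 < t j) (hr' : ∀ i, 0 < r' i) (ht' : ∀ j, 0 < t' j)
    (hpq : 1 ≤ p + q)
    (harea : (∑ i, (r i : ℝ)) + S * (∑ j, (t j : ℝ))
      ≥ (∑ i, (r' i : ℝ)) + S * (∑ j, (t' j : ℝ))) :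
    (∑ i, ((r i : ℤ) + ⌈(r i : ℝ) / S⌉)) + (∑ j, ((t j : ℤ) + ⌈(t j : ℝ) * S⌉))
      ≥ 1 + (∑ i, ((r' i : ℤ) + ⌊(r' i : ℝ) / S⌋))
          + (∑ j, ((t' j : ℤ) + ⌊(t' j : ℝ) * S⌋)) :=
  stmt_4_general S hSpos hSirr p q p' q' r t r' t' hr ht hpq harea
end

section
/- Let s ≥ 1 and L_top ≥ 1 and L_low ≥ 0 be integers. Suppose given integers I_i and natural numbers s_i for i = 1,…,L_top with each I_i − s_i even, and natural numbers r_j, t_j for j = 1,…,L_low, satisfying: (1) Σ_i s_i = Σ_j r_j; (2) Σ_j t_j = s; (3) L_top + L_low − Σ_j r_j = 1; and (4) Σ_i I_i + Σ_j (2r_j + t_j − 2) − Σ_i s_i ≥ s. Then there exists an index i with I_i ≥ s_i. -/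
/-- Index bookkeeping in the compactness argument of Lemma 3.3: some top level curve
of the limit building has index at least its number of negative ends. -/
theorem stmt_9 (s Ltop Llow : ℕ) (hs : 1 ≤ s) (hLtop : 1 ≤ Ltop)
    (I : Fin Ltop → ℤ) (se : Fin Ltop → ℕ) (r t : Fin Llow → ℕ)
    (heven : ∀ i, Even (I i - (se i : ℤ)))
    (h1 : ∑ i, se i = ∑ j, r j)
    (h2 : ∑ j, t j = s)
    (h3 : (Ltop : ℤ) + (Llow : ℤ) - ∑ j, (r j : ℤ) = 1)
    (h4 : (∑ i, I i) + (∑ j, (2 * (r j : ℤ) + (t j : ℤ) - 2)) - (∑ i, (se i : ℤ))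
      ≥ (s : ℤ)) :
    ∃ i, I i ≥ (se i : ℤ) := by
  by_contra h
  push_neg at h
  have hle : ∀ i : Fin Ltop, I i - (se i : ℤ) ≤ -2 := by
    intro i
    obtain ⟨k, hk⟩ := heven i
    have hne : I i - (se i : ℤ) < 0 := by linarith [h i]
    omega
  have hsum : ∑ i, (I i - (se i : ℤ)) ≤ ∑ _i : Fin Ltop, (-2 : ℤ) :=
    Finset.sum_le_sum fun i _ => hle i
  simp only [Finset.sum_const, Finset.card_univ, Fintype.card_fin, nsmul_eq_mul] at hsum
  rw [Finset.sum_sub_distrib] at hsum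
  have e1 : ∑ j, (2 * (r j : ℤ) + (t j : ℤ) - 2)
      = 2 * (∑ j, (r j : ℤ)) + (∑ j, (t j : ℤ)) - 2 * Llow := by
    rw [Finset.sum_sub_distrib, Finset.sum_add_distrib, ← Finset.mul_sum]
    simp [Finset.sum_const, mul_comm]
  have e2 : (∑ j, (t j : ℤ)) = (s : ℤ) := by
    rw [← Nat.cast_sum, h2]
  rw [e1, e2] at h4
  have hL : (1:ℤ) ≤ (Ltop:ℤ) := by exact_mod_cast hLtop
  linarith
end
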